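/- arXiv:1301.6447 — 2 statements merged into one kernel-verified Lean document; each statement's English description precedes it below -/
import Mathlib

section
/- There exist absolute constants C > 0 and ε₀, δ₀ > 0 such that the following holds. Let A be an M × N complex matrix and let 𝒜 be an (ε,δ)-differentially private algorithm with ε ≤ ε₀ and δ ≤ δ₀. Then there exists a vector x ∈ {0,1}^N such that for every L × M orthogonal projection matrix P and every K × K submatrix B of PA, E[‖𝒜(x) − Ax‖₂²] ≥ C · K · |det(B)|^{2/K} / (log₂ N)². -/
open MeasureTheory Finset
open scoped ENNReal NNReal

noncomputable section

/-- `(ε,δ)`-differential privacy for a randomized algorithm mapping inputs in `[0,1]^N`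
(ℓ₁-neighboring inputs differ by at most 1 in ℓ₁ norm) to probability measures on `Ω`. -/
def DiffPrivate {N : ℕ} {Ω : Type*} [MeasurableSpace Ω]
    (A : (Fin N → ℝ) → Measure Ω) (ε δ : ℝ) : Prop :=
  ∀ x x' : Fin N → ℝ,
    (∀ i, x i ∈ Set.Icc (0 : ℝ) 1) → (∀ i, x' i ∈ Set.Icc (0 : ℝ) 1) →
    (∑ i, |x i - x' i|) ≤ 1 →
    ∀ T : Set Ω, MeasurableSet T →
      A x T ≤ ENNReal.ofReal (Real.exp ε) * A x' T + ENNReal.ofReal δ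

/-!
Fix the input `x` maximising the expected error over `{0,1}^N`. For a `K × K` submatrix `B` of
`PA`, sort the eigenvalues of `BᴴB`; since their product is `|det B|²`, some level `θ` is reached by
`s` eigenvalues with `θ s² ≳ K² |det B|^{2/K}`. Let `Q` project onto the corresponding eigenvectors:
then `θ ‖Qz‖² ≤ ‖Bz‖² ≤ ‖A_c z‖²`, where `A_c` keeps the columns of `A` used by `B`, and the
diagonal of `Q` has sum `s`.

Feed the algorithm the vertices of the cube `{0,1}^K`, placed on the columns of `B`, and decode each
output to the nearest vertex. If the error were below `Θ` everywhere, the decoded vertex would be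
`Q`-close to the true one with constant probability; but flipping coordinate `j` moves
`(Q ·)_j` by `Q_jj`, which privacy hides from the decoder for at least one of the two neighbours.
Averaging over the cube gives `θ ∑ Q_jj² ≲ Θ`, and Cauchy–Schwarz turns this into
`K |det B|^{2/K} ≲ Θ`.
-/

lemma exists_le_mul_sq_of_prod_eq_pow {K : ℕ} (hK : 0 < K) {μ : Fin K → ℝ} (hμ : ∀ i, 0 < μ i)
    {g : ℝ} (hg : 0 < g) (hprod : ∏ i, μ i = g ^ K) :
    ∃ m : Fin K, (K : ℝ) ^ 2 * g ≤ Real.exp 2 * (μ m * ((K - m : ℕ) : ℝ) ^ 2) := by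
  by_contra! h
  have : Nonempty (Fin K) := ⟨⟨0, hK⟩⟩
  have hlt : ∏ m : Fin K, (μ m * ((K - m : ℕ) : ℝ) ^ 2) <
      ∏ _m : Fin K, (K : ℝ) ^ 2 * g / Real.exp 2 :=
    prod_lt_prod_of_nonempty (fun m _ => mul_pos (hμ m) (pow_pos (Nat.cast_pos.mpr (by omega)) 2))
      (fun m _ => by rw [lt_div_iff₀ (Real.exp_pos 2), mul_comm]; exact h m) univ_nonempty
  have hfac : ∏ m : Fin K, ((K - m : ℕ) : ℝ) = K.factorial := by
    rw [← Nat.cast_prod, Fin.prod_univ_eq_prod_range (fun m => K - m),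
      ← Nat.descFactorial_eq_prod_range, Nat.descFactorial_self]
  have hstirling : (K : ℝ) ^ K ≤ Real.exp K * K.factorial := by
    have := Real.pow_div_factorial_le_exp (x := K) (Nat.cast_nonneg K) K
    rw [div_le_iff₀ (by positivity)] at this
    linarith
  have hexp : Real.exp 2 ^ K = Real.exp K ^ 2 := by
    rw [← Real.exp_nat_mul, ← Real.exp_nat_mul]; ring_nf
  -- the left side is `g ^ K * K! ^ 2`, which `K ^ K ≤ e ^ K * K!` bounds below by the right side
  rw [prod_mul_distrib, hprod, prod_pow, hfac, prod_const, card_univ, Fintype.card_fin, div_pow,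
    mul_pow, hexp, lt_div_iff₀ (by positivity), ← pow_mul, mul_comm 2 K, pow_mul] at hlt
  have := pow_le_pow_left₀ (by positivity) hstirling 2
  nlinarith [pow_pos hg K]

lemma exists_finset_of_prod_eq_pow {K : ℕ} (hK : 0 < K) {μ : Fin K → ℝ} (hμ : ∀ i, 0 < μ i)
    {g : ℝ} (hg : 0 < g) (hprod : ∏ i, μ i = g ^ K) :
    ∃ θ > 0, ∃ S : Finset (Fin K), (∀ i ∈ S, θ ≤ μ i) ∧
      (K : ℝ) ^ 2 * g ≤ Real.exp 2 * (θ * #S ^ 2) := by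
  set σ := Tuple.sort μ
  obtain ⟨m, hm⟩ := exists_le_mul_sq_of_prod_eq_pow hK (μ := μ ∘ σ) (fun i => hμ _) hg
    (by rw [← hprod]; exact Equiv.prod_comp σ μ)
  refine ⟨μ (σ m), hμ _, (Ici m).map σ.toEmbedding, ?_, ?_⟩
  · simp only [mem_map_equiv, mem_Ici]
    intro i hi
    simpa using Tuple.monotone_sort μ hi |>.trans_eq (congrArg μ (σ.apply_symm_apply i))
  · rwa [card_map, Fin.card_Ici]

namespace Matrix

lemma star_dotProduct_self_eq_sum_sq {ι : Type*} [Fintype ι] (v : ι → ℂ) :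
    star v ⬝ᵥ v = ((∑ i, ‖v i‖ ^ 2 : ℝ) : ℂ) := by
  simp [dotProduct, Complex.conj_mul']

variable {m n : Type*} [Fintype m] [DecidableEq n]

lemma sum_sq_col_eq_one {U : Matrix m n ℂ} (hU : Uᴴ * U = 1) (i : n) :
    ∑ j, ‖U j i‖ ^ 2 = 1 := by
  have h := congr_fun (congr_fun hU i) i
  simp only [mul_apply, conjTranspose_apply, Complex.star_def, Complex.conj_mul', one_apply_eq] at h
  exact_mod_cast h

variable [Fintype n]

lemma sum_sq_mulVec_of_conjTranspose_mul_self {U : Matrix m n ℂ} (hU : Uᴴ * U = 1) (w : n → ℂ) :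
    ∑ i, ‖(U *ᵥ w) i‖ ^ 2 = ∑ i, ‖w i‖ ^ 2 := by
  have h : star (U *ᵥ w) ⬝ᵥ (U *ᵥ w) = star w ⬝ᵥ w := by
    rw [star_mulVec, ← dotProduct_mulVec, mulVec_mulVec, hU, one_mulVec]
  rw [star_dotProduct_self_eq_sum_sq, star_dotProduct_self_eq_sum_sq] at h
  exact_mod_cast h

lemma IsHermitian.star_dotProduct_mulVec_eq_sum {H : Matrix n n ℂ} (hH : H.IsHermitian)
    (z : n → ℂ) : star z ⬝ᵥ (H *ᵥ z) = ((∑ i, hH.eigenvalues i *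
      ‖((hH.eigenvectorUnitary : Matrix n n ℂ)ᴴ *ᵥ z) i‖ ^ 2 : ℝ) : ℂ) := by
  set U : Matrix n n ℂ := ↑hH.eigenvectorUnitary
  have hU : star z ᵥ* U = star (Uᴴ *ᵥ z) := by rw [star_mulVec, conjTranspose_conjTranspose]
  conv_lhs => rw [hH.spectral_theorem, Unitary.conjStarAlgAut_apply, ← mulVec_mulVec,
    ← mulVec_mulVec, dotProduct_mulVec, star_eq_conjTranspose, hU]
  push_cast
  simp only [dotProduct, mulVec_diagonal, Pi.star_apply, Function.comp_apply, Complex.star_def]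
  refine sum_congr rfl fun i _ => ?_
  rw [mul_left_comm, Complex.conj_mul']
  rfl

lemma sum_sq_mulVec_eq_sum_eigenvalues_mul {B : Matrix m n ℂ} (hH : (Bᴴ * B).IsHermitian)
    (z : n → ℂ) : ∑ i, ‖(B *ᵥ z) i‖ ^ 2 =
      ∑ i, hH.eigenvalues i * ‖((hH.eigenvectorUnitary : Matrix n n ℂ)ᴴ *ᵥ z) i‖ ^ 2 := by
  have h := hH.star_dotProduct_mulVec_eq_sum z
  rw [← mulVec_mulVec, dotProduct_mulVec, ← star_mulVec, star_dotProduct_self_eq_sum_sq] at h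
  exact_mod_cast h

lemma prod_eigenvalues_conjTranspose_mul_self {B : Matrix n n ℂ} (hH : (Bᴴ * B).IsHermitian) :
    ∏ i, hH.eigenvalues i = ‖B.det‖ ^ 2 := by
  have h := hH.det_eq_prod_eigenvalues
  rw [det_mul, det_conjTranspose, Complex.star_def, Complex.conj_mul'] at h
  exact Complex.ofReal_injective (by push_cast; exact h.symm)

def colProj (U : Matrix n n ℂ) (S : Finset n) : Matrix n n ℂ :=
  U * diagonal (fun i => if i ∈ S then 1 else 0) * Uᴴ

lemma colProj_apply_self (U : Matrix n n ℂ) (S : Finset n) (j : n) :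
    colProj U S j j = ((∑ i ∈ S, ‖U j i‖ ^ 2 : ℝ) : ℂ) := by
  rw [colProj, mul_apply]
  simp [mul_diagonal, Complex.mul_conj', sum_ite_mem]

lemma sum_sq_colProj_mulVec {U : Matrix n n ℂ} (hU : Uᴴ * U = 1) (S : Finset n) (z : n → ℂ) :
    ∑ j, ‖(colProj U S *ᵥ z) j‖ ^ 2 = ∑ i ∈ S, ‖(Uᴴ *ᵥ z) i‖ ^ 2 := by
  rw [colProj, ← mulVec_mulVec, ← mulVec_mulVec, sum_sq_mulVec_of_conjTranspose_mul_self hU]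
  simp [mulVec_diagonal, apply_ite (fun x : ℂ => ‖x‖ ^ 2), sum_ite_mem]

open scoped ComplexOrder in
lemma mul_sum_sq_colProj_mulVec_le {B : Matrix m n ℂ} (hH : (Bᴴ * B).IsHermitian) {S : Finset n}
    {θ : ℝ} (hS : ∀ i ∈ S, θ ≤ hH.eigenvalues i) (z : n → ℂ) :
    θ * ∑ j, ‖(colProj (hH.eigenvectorUnitary : Matrix n n ℂ) S *ᵥ z) j‖ ^ 2 ≤
      ∑ i, ‖(B *ᵥ z) i‖ ^ 2 := by
  set U : Matrix n n ℂ := ↑hH.eigenvectorUnitary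
  have hμ : ∀ i, 0 ≤ hH.eigenvalues i := (posSemidef_conjTranspose_mul_self B).eigenvalues_nonneg
  rw [sum_sq_colProj_mulVec (Unitary.coe_star_mul_self hH.eigenvectorUnitary) S,
    sum_sq_mulVec_eq_sum_eigenvalues_mul hH, mul_sum]
  calc ∑ i ∈ S, θ * ‖(Uᴴ *ᵥ z) i‖ ^ 2 ≤ ∑ i ∈ S, hH.eigenvalues i * ‖(Uᴴ *ᵥ z) i‖ ^ 2 :=
        sum_le_sum fun i hi => by gcongr; exact hS i hi
    _ ≤ ∑ i, hH.eigenvalues i * ‖(Uᴴ *ᵥ z) i‖ ^ 2 :=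
        sum_le_sum_of_subset_of_nonneg (subset_univ S) fun i _ _ => by have := hμ i; positivity

open scoped ComplexOrder in
theorem exists_dominated_with_large_diagonal {K : ℕ} (B : Matrix (Fin K) (Fin K) ℂ) :
    ∃ (θ : ℝ) (Q : Matrix (Fin K) (Fin K) ℂ) (n : Fin K → ℝ), 0 ≤ θ ∧ (∀ j, 0 ≤ n j) ∧
      (∀ j, Q j j = n j) ∧ (∀ z, θ * ∑ j, ‖(Q *ᵥ z) j‖ ^ 2 ≤ ∑ i, ‖(B *ᵥ z) i‖ ^ 2) ∧
      K * ‖B.det‖ ^ ((2 : ℝ) / K) ≤ Real.exp 2 * (θ * ∑ j, n j ^ 2) := by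
  rcases K.eq_zero_or_pos with rfl | hK
  · exact ⟨0, 0, 0, by simp⟩
  by_cases hdet : B.det = 0
  · refine ⟨0, 0, 0, le_rfl, fun _ => le_rfl, by simp, fun z => by simp; positivity, ?_⟩
    simp [hdet, Real.zero_rpow (by positivity : (2 : ℝ) / K ≠ 0)]
  set hH := isHermitian_conjTranspose_mul_self B
  set U : Matrix (Fin K) (Fin K) ℂ := ↑hH.eigenvectorUnitary
  have hUU : Uᴴ * U = 1 := Unitary.coe_star_mul_self hH.eigenvectorUnitary
  set g := ‖B.det‖ ^ ((2 : ℝ) / K)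
  have hprod : ∏ i, hH.eigenvalues i = g ^ K := by
    rw [prod_eigenvalues_conjTranspose_mul_self hH, ← Real.rpow_natCast g,
      ← Real.rpow_mul (norm_nonneg _), div_mul_cancel₀ _ (Nat.cast_ne_zero.2 hK.ne'), Real.rpow_two]
  have hμ : ∀ i, 0 < hH.eigenvalues i := fun i =>
    ((posSemidef_conjTranspose_mul_self B).eigenvalues_nonneg i).lt_of_ne' <|
      (prod_ne_zero_iff.mp (by rw [hprod]; positivity)) i (mem_univ i)
  obtain ⟨θ, hθ, S, hθS, hg⟩ := exists_finset_of_prod_eq_pow hK hμ (by positivity) hprod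
  refine ⟨θ, colProj U S, fun j => ∑ i ∈ S, ‖U j i‖ ^ 2, hθ.le, fun j => by positivity,
    colProj_apply_self U S, mul_sum_sq_colProj_mulVec_le hH hθS, ?_⟩
  have hsum : ∑ j, ∑ i ∈ S, ‖U j i‖ ^ 2 = #S := by
    rw [sum_comm]; simp [sum_sq_col_eq_one hUU]
  have hcs := sq_sum_le_card_mul_sum_sq (s := univ) (f := fun j => ∑ i ∈ S, ‖U j i‖ ^ 2)
  rw [hsum, card_univ, Fintype.card_fin] at hcs
  have hKpos : (0 : ℝ) < K := by exact_mod_cast hK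
  refine le_of_mul_le_mul_left ?_ hKpos
  calc (K : ℝ) * (K * g) = K ^ 2 * g := by ring
    _ ≤ Real.exp 2 * (θ * #S ^ 2) := hg
    _ ≤ Real.exp 2 * (θ * (K * ∑ j, (∑ i ∈ S, ‖U j i‖ ^ 2) ^ 2)) := by gcongr
    _ = K * (Real.exp 2 * (θ * ∑ j, (∑ i ∈ S, ‖U j i‖ ^ 2) ^ 2)) := by ring

end Matrix

lemma card_mul_le_two_mul_sum_of_update {κ : Type*} [Fintype κ] [DecidableEq κ]
    (f : (κ → Bool) → ℝ) (j : κ) {a : ℝ}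
    (h : ∀ ξ, ξ j = false → a ≤ f (Function.update ξ j true) + f ξ) :
    Fintype.card (κ → Bool) * a ≤ 2 * ∑ b, f b := by
  let flip := fun b : κ → Bool => Function.update b j (!b j)
  have hinv : Function.Involutive flip := fun b => by simp [flip]
  have hflip : ∀ b, a ≤ f b + f (flip b) := by
    intro b
    cases hb : b j
    · simpa [flip, hb, add_comm] using h b hb
    · have hb' : Function.update b j true = b := by rw [← hb, Function.update_eq_self]
      simpa [flip, hb, hb', add_comm] using h (flip b) (by simp [flip, hb])
  calc Fintype.card (κ → Bool) * a = ∑ _b : κ → Bool, a := by simp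
    _ ≤ ∑ b, (f b + f (flip b)) := sum_le_sum fun b _ => hflip b
    _ = 2 * ∑ b, f b := by
      rw [sum_add_distrib, ← Function.Involutive.coe_toPerm hinv, Equiv.sum_comp]; ring

lemma sum_mul_measureReal_le {Ω ι : Type*} [MeasurableSpace Ω] [Fintype ι] {μ : Measure Ω}
    [IsProbabilityMeasure μ] {E : ι → Set Ω} (hE : ∀ j, MeasurableSet (E j)) (c : ι → ℝ) {C : ℝ}
    (h : ∀ y, ∑ j, (E j).indicator (fun _ => c j) y ≤ C) : ∑ j, c j * μ.real (E j) ≤ C := by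
  have hint : ∀ j, Integrable ((E j).indicator fun _ => c j) μ :=
    fun j => (integrable_const (c j)).indicator (hE j)
  calc ∑ j, c j * μ.real (E j) = ∫ y, ∑ j, (E j).indicator (fun _ => c j) y ∂μ := by
        rw [integral_finsetSum _ fun j _ => hint j]
        simp [integral_indicator_const _ (hE _), mul_comm]
    _ ≤ ∫ _, C ∂μ := integral_mono (integrable_finsetSum _ fun j _ => hint j) (integrable_const C) h
    _ = C := by simp

lemma sum_norm_sub_sq_le {ι E : Type*} [Fintype ι] [SeminormedAddCommGroup E] (u v : ι → E) :
    ∑ i, ‖u i - v i‖ ^ 2 ≤ 2 * ∑ i, ‖u i‖ ^ 2 + 2 * ∑ i, ‖v i‖ ^ 2 := by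
  rw [mul_sum, mul_sum, ← sum_add_distrib]
  gcongr with i
  nlinarith [norm_sub_le (u i) (v i), sq_nonneg (‖u i‖ - ‖v i‖), norm_nonneg (u i - v i)]

lemma ofReal_sum_norm_sq {ι : Type*} [Fintype ι] (u : ι → ℂ) :
    ENNReal.ofReal (∑ i, ‖u i‖ ^ 2) = ∑ i, (‖u i‖₊ : ℝ≥0∞) ^ 2 := by
  rw [ENNReal.ofReal_sum_of_nonneg fun i _ => by positivity]
  simp [ENNReal.ofReal_pow, ofReal_norm, enorm_eq_nnnorm]

lemma three_quarters_le_measureReal_of_lintegral_le {Ω : Type*} [MeasurableSpace Ω]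
    {μ : Measure Ω} [IsProbabilityMeasure μ] {f : Ω → ℝ} (hf : Measurable f) {Θ : ℝ} (hΘ : 0 < Θ)
    (h : ∫⁻ y, ENNReal.ofReal (f y) ∂μ ≤ ENNReal.ofReal Θ) : 3 / 4 ≤ μ.real {y | f y ≤ 4 * Θ} := by
  have hmarkov :
      μ {y | ENNReal.ofReal (4 * Θ) ≤ ENNReal.ofReal (f y)} ≤ ENNReal.ofReal (1 / 4) := by
    refine (meas_ge_le_lintegral_div hf.ennreal_ofReal.aemeasurable (by simpa using hΘ)
      ENNReal.ofReal_ne_top).trans ?_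
    calc (∫⁻ y, ENNReal.ofReal (f y) ∂μ) / ENNReal.ofReal (4 * Θ)
        ≤ ENNReal.ofReal Θ / ENNReal.ofReal (4 * Θ) := by gcongr
      _ = ENNReal.ofReal (1 / 4) := by
        rw [← ENNReal.ofReal_div_of_pos (by positivity)]; field_simp
  have hcompl : μ.real {y | f y ≤ 4 * Θ}ᶜ ≤ 1 / 4 := by
    refine ENNReal.toReal_le_of_le_ofReal (by norm_num)
      ((measure_mono fun y hy => ?_).trans hmarkov)
    exact ENNReal.ofReal_le_ofReal (not_le.mp (Set.notMem_ofPred_iff.mp hy)).le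
  rw [measureReal_compl (measurableSet_le hf measurable_const), probReal_univ] at hcompl
  linarith

/-- The event `a / 2 < re v₀` tells `v₀ = v₁ + a` apart from `v₁` unless `|vᵢ| ≥ a / 2`;
privacy (`hT`) forbids it to do so reliably. -/
lemma one_tenth_le_measureReal_add {Ω : Type*} [MeasurableSpace Ω] {μ₀ μ₁ : Measure Ω}
    [IsProbabilityMeasure μ₀] [IsProbabilityMeasure μ₁] {G₀ G₁ : Set Ω} {v₀ v₁ : Ω → ℂ} {a : ℝ}
    (hG₀m : MeasurableSet G₀) (hG₀ : 3 / 4 ≤ μ₀.real G₀) (hG₁ : 3 / 4 ≤ μ₁.real G₁)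
    (hv : ∀ y, v₀ y = v₁ y + a)
    (hT : μ₁.real {y | a / 2 < (v₀ y).re} ≤ 2 * μ₀.real {y | a / 2 < (v₀ y).re} + 1 / 20) :
    1 / 10 ≤ μ₁.real (G₁ ∩ {y | a / 2 ≤ ‖v₁ y‖}) + μ₀.real (G₀ ∩ {y | a / 2 ≤ ‖v₀ y‖}) := by
  set T := {y | a / 2 < (v₀ y).re}
  have h₁ : μ₁.real G₁ ≤ μ₁.real T + μ₁.real (G₁ ∩ {y | a / 2 ≤ ‖v₁ y‖}) := by
    refine (measureReal_mono fun y hy => ?_).trans (measureReal_union_le _ _)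
    by_cases hx : a / 2 ≤ ‖v₁ y‖
    · exact Or.inr ⟨hy, hx⟩
    · left
      show a / 2 < (v₀ y).re
      rw [hv, Complex.add_re, Complex.ofReal_re]
      linarith [neg_abs_le (v₁ y).re, Complex.abs_re_le_norm (v₁ y)]
  have h₀ : μ₀.real T ≤ μ₀.real G₀ᶜ + μ₀.real (G₀ ∩ {y | a / 2 ≤ ‖v₀ y‖}) := by
    refine (measureReal_mono fun y hy => ?_).trans (measureReal_union_le _ _)
    by_cases hg : y ∈ G₀
    · exact Or.inr ⟨hg, le_trans (le_of_lt hy) (Complex.re_le_norm _)⟩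
    · exact Or.inl hg
  rw [measureReal_compl hG₀m, probReal_univ] at h₀
  linarith [measureReal_nonneg (μ := μ₁) (s := G₁ ∩ {y | a / 2 ≤ ‖v₁ y‖})]

lemma sum_mul_measureReal_le_of_sum_sq_le {Ω κ : Type*} [MeasurableSpace Ω] [Fintype κ]
    {μ : Measure Ω} [IsProbabilityMeasure μ] {G : Set Ω} {v : Ω → κ → ℂ} {n : κ → ℝ}
    (hn : ∀ j, 0 ≤ n j) (hGm : MeasurableSet G) (hvm : ∀ j, MeasurableSet {y | n j / 2 ≤ ‖v y j‖})
    {θ C : ℝ} (hθ : 0 ≤ θ) (hC : 0 ≤ C) (hv : ∀ y ∈ G, θ * ∑ j, ‖v y j‖ ^ 2 ≤ C) :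
    ∑ j, θ * n j ^ 2 * μ.real (G ∩ {y | n j / 2 ≤ ‖v y j‖}) ≤ 4 * C := by
  refine sum_mul_measureReal_le (fun j => hGm.inter (hvm j)) _ fun y => ?_
  by_cases hy : y ∈ G
  · calc ∑ j, (G ∩ {y | n j / 2 ≤ ‖v y j‖}).indicator (fun _ => θ * n j ^ 2) y
        ≤ ∑ j, θ * (4 * ‖v y j‖ ^ 2) := sum_le_sum fun j _ => by
          by_cases hj : n j / 2 ≤ ‖v y j‖
          · rw [Set.indicator_of_mem (show y ∈ G ∩ {y | n j / 2 ≤ ‖v y j‖} from ⟨hy, hj⟩)]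
            gcongr; nlinarith [hn j]
          · rw [Set.indicator_of_notMem fun h => hj h.2]; positivity
      _ = 4 * (θ * ∑ j, ‖v y j‖ ^ 2) := by
        rw [mul_sum, mul_sum]; exact sum_congr rfl fun j _ => by ring
      _ ≤ 4 * C := by linarith [hv y hy]
  · simp [Set.indicator_of_notMem (fun h : y ∈ G ∩ _ => hy h.1)]
    linarith

lemma sum_le_of_cube_pairs {κ : Type*} [Fintype κ] [DecidableEq κ] {F : κ → (κ → Bool) → ℝ}
    {w : κ → ℝ} (hw : ∀ j, 0 ≤ w j)
    (hpair : ∀ j ξ, ξ j = false → 1 / 10 ≤ F j (Function.update ξ j true) + F j ξ)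
    {C : ℝ} (hcount : ∀ b, ∑ j, w j * F j b ≤ C) : ∑ j, w j ≤ 20 * C := by
  have hcard : (0 : ℝ) < Fintype.card (κ → Bool) := by exact_mod_cast Fintype.card_pos
  refine le_of_mul_le_mul_left ?_ hcard
  calc (Fintype.card (κ → Bool) : ℝ) * ∑ j, w j
      = 10 * ∑ j, w j * (Fintype.card (κ → Bool) * (1 / 10)) := by
        rw [mul_sum, mul_sum]; exact sum_congr rfl fun j _ => by ring
    _ ≤ 10 * ∑ j, w j * (2 * ∑ b, F j b) := by
        gcongr 10 * ∑ j, _ * ?_ with j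
        · exact hw j
        · exact card_mul_le_two_mul_sum_of_update (F j) j (hpair j)
    _ = 20 * ∑ j, ∑ b, w j * F j b := by
        simp only [mul_sum]; exact sum_congr rfl fun j _ => sum_congr rfl fun b _ => by ring
    _ = 20 * ∑ b, ∑ j, w j * F j b := by rw [sum_comm]
    _ ≤ 20 * ∑ _b : κ → Bool, C := by gcongr with b; exact hcount b
    _ = Fintype.card (κ → Bool) * (20 * C) := by simp; ring

lemma exists_measurable_argmin {ι Ω : Type*} [Fintype ι] [Nonempty ι] [MeasurableSpace Ω]
    {f : ι → Ω → ℝ} (hf : ∀ i, Measurable (f i)) :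
    ∃ g : Ω → ι, (∀ y i, f (g y) y ≤ f i y) ∧ ∀ s : Set ι, MeasurableSet (g ⁻¹' s) := by
  -- ties are broken by an enumeration of `ι`, so that the minimiser is unique
  let e := Fintype.equivFin ι
  let key : ι → Ω → ℝ ×ₗ Fin (Fintype.card ι) := fun i y => toLex (f i y, e i)
  choose g hg using fun y => exists_min_image univ (key · y) univ_nonempty
  have hkey : ∀ y i, g y = i ↔ ∀ j, key i y ≤ key j y := by
    refine fun y i => ⟨?_, fun h => e.injective ?_⟩
    · rintro rfl
      exact fun j => (hg y).2 j (mem_univ j)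
    · exact congrArg (fun p => (ofLex p).2) (le_antisymm ((hg y).2 i (mem_univ i)) (h (g y)))
  refine ⟨g, fun y i => ?_, fun s => ?_⟩
  · exact (Prod.Lex.toLex_le_toLex.mp ((hg y).2 i (mem_univ i))).elim le_of_lt (fun h => h.1.le)
  · have : g ⁻¹' s = ⋃ i ∈ s, ⋂ j, {y | key i y ≤ key j y} := by
      ext y
      simp only [Set.mem_preimage, Set.mem_iUnion, Set.mem_iInter, Set.mem_ofPred_eq, ← hkey,
        exists_prop, exists_eq_right']
    rw [this]
    refine MeasurableSet.biUnion s.to_countable fun i _ => MeasurableSet.iInter fun j => ?_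
    simp only [key, Prod.Lex.toLex_le_toLex, Set.ofPred_or, Set.ofPred_and]
    exact (measurableSet_lt (hf i) (hf j)).union
      ((measurableSet_eq_fun (hf i) (hf j)).inter (MeasurableSet.const _))

def boolVec (R : Type*) [Zero R] [One R] {κ : Type*} (b : κ → Bool) : κ → R :=
  fun j => if b j then 1 else 0

lemma boolVec_update_true_sub {R κ : Type*} [AddGroup R] [One R] [DecidableEq κ] {ξ : κ → Bool}
    {j : κ} (hξ : ξ j = false) :
    boolVec R (Function.update ξ j true) - boolVec R ξ = Pi.single j 1 := by
  ext k
  by_cases hk : k = j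
  · subst hk; simp [boolVec, hξ]
  · simp [boolVec, hk]

open Matrix in
lemma mulVec_sub_boolVec_apply_self {κ : Type*} [Fintype κ] [DecidableEq κ] {Q : Matrix κ κ ℂ}
    {u : κ → ℂ} {ξ : κ → Bool} {j : κ} (hξ : ξ j = false) :
    (Q *ᵥ (u - boolVec ℂ ξ)) j = (Q *ᵥ (u - boolVec ℂ (Function.update ξ j true))) j + Q j j := by
  rw [← sub_add_sub_cancel u (boolVec ℂ (Function.update ξ j true)), boolVec_update_true_sub hξ,
    mulVec_add, Pi.add_apply, mulVec_single_one, col_apply]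

open Matrix in
theorem mul_sum_sq_le_of_cube_private {ι κ : Type*} [Fintype ι] [Fintype κ] [DecidableEq κ]
    (ν : (κ → Bool) → Measure (ι → ℂ)) [∀ b, IsProbabilityMeasure (ν b)]
    (hν : ∀ j ξ, ξ j = false → ∀ T, MeasurableSet T →
      (ν (Function.update ξ j true)).real T ≤ 2 * (ν ξ).real T + 1 / 20)
    (A : Matrix ι κ ℂ) {Θ : ℝ} (hΘ : 0 < Θ)
    (herr : ∀ b, ∫⁻ y, ∑ i, (‖y i - (A *ᵥ boolVec ℂ b) i‖₊ : ℝ≥0∞) ^ 2 ∂ν b ≤ ENNReal.ofReal Θ)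
    {Q : Matrix κ κ ℂ} {n : κ → ℝ} (hn : ∀ j, 0 ≤ n j) (hQ : ∀ j, Q j j = n j)
    {θ : ℝ} (hθ : 0 ≤ θ) (hQA : ∀ z, θ * ∑ j, ‖(Q *ᵥ z) j‖ ^ 2 ≤ ∑ i, ‖(A *ᵥ z) i‖ ^ 2) :
    θ * ∑ j, n j ^ 2 ≤ 1280 * Θ := by
  set dist : (κ → Bool) → (ι → ℂ) → ℝ := fun b y => ∑ i, ‖y i - (A *ᵥ boolVec ℂ b) i‖ ^ 2
  have hdist : ∀ b, Measurable (dist b) := fun b => by fun_prop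
  obtain ⟨dec, hdec, hdecm⟩ := exists_measurable_argmin hdist
  set G : (κ → Bool) → Set (ι → ℂ) := fun b => {y | dist b y ≤ 4 * Θ}
  have hGm : ∀ b, MeasurableSet (G b) := fun b => measurableSet_le (hdist b) measurable_const
  have hG : ∀ b, 3 / 4 ≤ (ν b).real (G b) := fun b =>
    three_quarters_le_measureReal_of_lintegral_le (hdist b) hΘ
      (by simpa only [dist, ofReal_sum_norm_sq] using herr b)
  set D : (κ → Bool) → (ι → ℂ) → κ → ℂ := fun b y => Q *ᵥ (boolVec ℂ (dec y) - boolVec ℂ b)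
  have hD : ∀ b, ∀ y ∈ G b, θ * ∑ j, ‖D b y j‖ ^ 2 ≤ 16 * Θ := by
    intro b y hy
    have hsplit : A *ᵥ (boolVec ℂ (dec y) - boolVec ℂ b) =
        fun i => (y i - (A *ᵥ boolVec ℂ b) i) - (y i - (A *ᵥ boolVec ℂ (dec y)) i) := by
      ext i; simp [mulVec_sub]
    refine (hQA _).trans ?_
    rw [hsplit]
    exact (sum_norm_sub_sq_le _ _).trans (by linarith [hdec y b, show dist b y ≤ 4 * Θ from hy])
  have hpair : ∀ j ξ, ξ j = false → 1 / 10 ≤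
      (ν (Function.update ξ j true)).real
        (G (Function.update ξ j true) ∩ {y | n j / 2 ≤ ‖D (Function.update ξ j true) y j‖}) +
      (ν ξ).real (G ξ ∩ {y | n j / 2 ≤ ‖D ξ y j‖}) := by
    intro j ξ hξ
    refine one_tenth_le_measureReal_add (hGm ξ) (hG ξ) (hG _) (fun y => ?_) (hν j ξ hξ _ <|
      hdecm {d | n j / 2 < ((Q *ᵥ (boolVec ℂ d - boolVec ℂ ξ)) j).re})
    simp only [D]
    rw [mulVec_sub_boolVec_apply_self hξ, hQ]
  have hcount : ∀ b, ∑ j, θ * n j ^ 2 * (ν b).real (G b ∩ {y | n j / 2 ≤ ‖D b y j‖}) ≤ 64 * Θ :=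
    fun b => by
      linarith [sum_mul_measureReal_le_of_sum_sq_le (μ := ν b) hn (hGm b)
        (fun j => hdecm {d | n j / 2 ≤ ‖(Q *ᵥ (boolVec ℂ d - boolVec ℂ b)) j‖}) hθ (by positivity)
        (hD b)]
  rw [mul_sum]
  linarith [sum_le_of_cube_pairs (fun j => mul_nonneg hθ (sq_nonneg (n j))) hpair hcount]

/-- The 0/1 input supported on `c '' {j | b j}`. -/
def cubePoint {κ N : Type*} (c : κ → N) (b : κ → Bool) : N → ℝ :=
  Function.extend c (boolVec ℝ b) 0

section CubePoint

open Matrix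

variable {κ N : Type*} {c : κ → N}

lemma cubePoint_eq_zero_or_one (b : κ → Bool) (i : N) :
    cubePoint c b i = 0 ∨ cubePoint c b i = 1 := by
  classical
  rw [cubePoint, Function.extend_def]
  split_ifs
  · unfold boolVec; split_ifs <;> simp
  · simp

variable [Fintype κ] [Fintype N]

lemma mulVec_cubePoint {M : Type*} (hc : c.Injective) (A : Matrix M N ℂ) (b : κ → Bool) :
    A.mulVec (fun i => ((cubePoint c b i : ℝ) : ℂ)) = A.submatrix id c *ᵥ boolVec ℂ b := by
  ext m
  refine (Fintype.sum_of_injective c hc _ _ (fun i hi => ?_) fun j => ?_).symm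
  · simp [cubePoint, Function.extend_apply' _ _ _ hi]
  · simp only [cubePoint, hc.extend_apply, boolVec, submatrix_apply, id]
    split_ifs <;> simp

lemma sum_abs_cubePoint_update_sub [DecidableEq κ] (hc : c.Injective) {ξ : κ → Bool} {j : κ}
    (hξ : ξ j = false) :
    ∑ i, |cubePoint c (Function.update ξ j true) i - cubePoint c ξ i| = 1 := by
  rw [← Fintype.sum_of_injective c hc
    (fun k => |boolVec ℝ (Function.update ξ j true) k - boolVec ℝ ξ k|)]
  · simp [← Pi.sub_apply, boolVec_update_true_sub hξ, Pi.single_apply, apply_ite (|·|)]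
  · intro i hi; simp [cubePoint, Function.extend_apply' _ _ _ hi]
  · intro k; simp [cubePoint, hc.extend_apply]

end CubePoint

lemma DiffPrivate.measureReal_le {N : ℕ} {Ω : Type*} [MeasurableSpace Ω]
    {𝒜 : (Fin N → ℝ) → Measure Ω} [∀ x, IsFiniteMeasure (𝒜 x)] {ε δ : ℝ}
    (h : DiffPrivate 𝒜 ε δ) (hδ : 0 ≤ δ) {x x' : Fin N → ℝ} (hx : ∀ i, x i ∈ Set.Icc (0 : ℝ) 1)
    (hx' : ∀ i, x' i ∈ Set.Icc (0 : ℝ) 1) (hxx' : ∑ i, |x i - x' i| ≤ 1) {T : Set Ω}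
    (hT : MeasurableSet T) : (𝒜 x).real T ≤ Real.exp ε * (𝒜 x').real T + δ := by
  have := ENNReal.toReal_mono (by finiteness) (h x x' hx hx' hxx' T hT)
  rwa [ENNReal.toReal_add (by finiteness) (by finiteness), ENNReal.toReal_mul,
    ENNReal.toReal_ofReal (Real.exp_pos ε).le, ENNReal.toReal_ofReal hδ] at this

lemma Set.finite_setOf_forall_eq_zero_or_eq_one (N : Type*) [Finite N] :
    {x : N → ℝ | ∀ i, x i = 0 ∨ x i = 1}.Finite := by
  have : {x : N → ℝ | ∀ i, x i = 0 ∨ x i = 1} = Set.univ.pi fun _ => {0, 1} := by ext; simp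
  rw [this]
  exact Set.Finite.pi fun _ => Set.toFinite _

lemma div_logb_two_sq_le (N : ℕ) {a : ℝ} (ha : 0 ≤ a) : a / Real.logb 2 N ^ 2 ≤ a := by
  rcases Nat.lt_or_ge N 2 with hN | hN
  · interval_cases N <;> simp [ha]
  · have : 1 ≤ Real.logb 2 N := by
      rw [Real.le_logb_iff_rpow_le one_lt_two (by positivity), Real.rpow_one]
      exact_mod_cast hN
    exact div_le_self ha (by nlinarith)

open Matrix in
lemma sum_sq_submatrix_mul_mulVec_le {ι ρ μ ν κ : Type*} [Fintype ι] [Fintype ρ] [Fintype μ]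
    [Fintype ν] [Fintype κ] {P : Matrix ρ μ ℂ} (hP : ∀ v, ∑ i, ‖(P *ᵥ v) i‖ ^ 2 ≤ ∑ i, ‖v i‖ ^ 2)
    (A : Matrix μ ν ℂ) {r : ι → ρ} (hr : r.Injective) (c : κ → ν) (z : κ → ℂ) :
    ∑ i, ‖((P * A).submatrix r c *ᵥ z) i‖ ^ 2 ≤ ∑ i, ‖(A.submatrix id c *ᵥ z) i‖ ^ 2 := by
  have h : (P * A).submatrix r c *ᵥ z = (P *ᵥ (A.submatrix id c *ᵥ z)) ∘ r := by
    rw [submatrix_mul P A r id c Function.bijective_id, ← mulVec_mulVec]; rfl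
  calc ∑ i, ‖((P * A).submatrix r c *ᵥ z) i‖ ^ 2
      = ∑ l ∈ univ.map ⟨r, hr⟩, ‖(P *ᵥ (A.submatrix id c *ᵥ z)) l‖ ^ 2 := by rw [h, sum_map]; rfl
    _ ≤ ∑ l, ‖(P *ᵥ (A.submatrix id c *ᵥ z)) l‖ ^ 2 :=
      sum_le_sum_of_subset_of_nonneg (subset_univ _) fun _ _ _ => by positivity
    _ ≤ _ := hP _

lemma DiffPrivate.measureReal_cubePoint_le {N K : ℕ} {Ω : Type*} [MeasurableSpace Ω]
    {𝒜 : (Fin N → ℝ) → Measure Ω} [∀ x, IsProbabilityMeasure (𝒜 x)] {ε δ : ℝ}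
    (h : DiffPrivate 𝒜 ε δ) (hε : ε ≤ Real.log 2) (hδ₀ : 0 ≤ δ) (hδ : δ ≤ 1 / 20)
    {c : Fin K → Fin N} (hc : c.Injective) {ξ : Fin K → Bool} {j : Fin K} (hξ : ξ j = false)
    {T : Set Ω} (hT : MeasurableSet T) :
    (𝒜 (cubePoint c (Function.update ξ j true))).real T ≤
      2 * (𝒜 (cubePoint c ξ)).real T + 1 / 20 := by
  have hcube : ∀ b i, cubePoint c b i ∈ Set.Icc (0 : ℝ) 1 := fun b i => by
    rcases cubePoint_eq_zero_or_one (c := c) b i with h | h <;> simp [h]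
  have hexp : Real.exp ε ≤ 2 := (Real.exp_le_exp.2 hε).trans_eq (Real.exp_log two_pos)
  have := h.measureReal_le hδ₀ (hcube _) (hcube _) (sum_abs_cubePoint_update_sub hc hξ).le hT
  nlinarith [measureReal_nonneg (μ := 𝒜 (cubePoint c ξ)) (s := T)]

/-- projected determinant lower bound.  For any `M × N` complex matrix `A` and
any `(ε,δ)`-differentially private algorithm `𝒜` (with small enough `ε, δ`), there is a 0/1
input `x` such that for every `L × M` orthogonal projection matrix `P`
(ℓ₂-norm contraction) and every `K × K` submatrix `B` of `PA`,
`E[‖𝒜(x) − Ax‖₂²] ≥ C · K · |det B|^{2/K} / (log₂ N)²`. -/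
theorem projected_det_lower_bound :
    ∃ C ε₀ δ₀ : ℝ, 0 < C ∧ 0 < ε₀ ∧ 0 < δ₀ ∧
      ∀ (M N : ℕ) (A : Matrix (Fin M) (Fin N) ℂ)
        (𝒜 : (Fin N → ℝ) → Measure (Fin M → ℂ)),
        (∀ x, IsProbabilityMeasure (𝒜 x)) →
        ∀ ε δ : ℝ, 0 < ε → ε ≤ ε₀ → 0 < δ → δ ≤ δ₀ →
        DiffPrivate 𝒜 ε δ →
        ∃ x : Fin N → ℝ, (∀ i, x i = 0 ∨ x i = 1) ∧
          ∀ (L : ℕ) (P : Matrix (Fin L) (Fin M) ℂ),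
            (∀ v : Fin M → ℂ, ∑ i, ‖P.mulVec v i‖ ^ 2 ≤ ∑ i, ‖v i‖ ^ 2) →
            ∀ K : ℕ, 1 ≤ K →
            ∀ (r : Fin K → Fin L) (c : Fin K → Fin N),
              Function.Injective r → Function.Injective c →
              ENNReal.ofReal (C * (K : ℝ) * ‖((P * A).submatrix r c).det‖ ^ ((2 : ℝ) / K) /
                  (Real.logb 2 N) ^ 2) ≤
                ∫⁻ y, ∑ i, (‖y i - A.mulVec (fun n => ((x n : ℝ) : ℂ)) i‖₊ : ℝ≥0∞) ^ 2
                  ∂(𝒜 x) := by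
  -- `C = 1 / (2 * 1280 * exp 2)`: the constants of `mul_sum_sq_le_of_cube_private` and
  -- `exists_dominated_with_large_diagonal`, with a factor `2` to spare
  refine ⟨1 / (2560 * Real.exp 2), Real.log 2, 1 / 20, by positivity, Real.log_pos one_lt_two,
    by norm_num, fun M N A 𝒜 h𝒜 ε δ _ hε _ hδ hDP => ?_⟩
  set err : (Fin N → ℝ) → ℝ≥0∞ := fun x =>
    ∫⁻ y, ∑ i, (‖y i - A.mulVec (fun n => ((x n : ℝ) : ℂ)) i‖₊ : ℝ≥0∞) ^ 2 ∂(𝒜 x)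
  obtain ⟨x, hx, hmax⟩ := Set.exists_max_image _ err
    (Set.finite_setOf_forall_eq_zero_or_eq_one (Fin N)) ⟨0, fun _ => Or.inl rfl⟩
  refine ⟨x, hx, fun L P hP K _ r c hr hc => ?_⟩
  refine (ENNReal.ofReal_le_ofReal (div_logb_two_sq_le N (by positivity))).trans
    (not_lt.mp fun hlt => ?_)
  set Θ := 1 / (2560 * Real.exp 2) * K * ‖((P * A).submatrix r c).det‖ ^ ((2 : ℝ) / K)
  have hΘ : 0 < Θ := ENNReal.ofReal_pos.mp (zero_le.trans_lt hlt)
  obtain ⟨θ, Q, n, hθ, hn, hQ, hQB, hdet⟩ :=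
    ((P * A).submatrix r c).exists_dominated_with_large_diagonal
  have herr : ∀ b, err (cubePoint c b) ≤ ENNReal.ofReal Θ := fun b =>
    (hmax _ fun i => cubePoint_eq_zero_or_one b i).trans hlt.le
  simp only [err, mulVec_cubePoint hc] at herr
  have hsum := mul_sum_sq_le_of_cube_private _
    (fun j ξ hξ T hT => hDP.measureReal_cubePoint_le hε (by positivity) hδ hc hξ hT) _ hΘ herr hn hQ
    hθ fun z => (hQB z).trans (sum_sq_submatrix_mul_mulVec_le hP A hr c z)
  have : Θ ≤ Θ / 2 := calc
    Θ = 1 / (2560 * Real.exp 2) * (K * ‖((P * A).submatrix r c).det‖ ^ ((2 : ℝ) / K)) := by ring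
    _ ≤ 1 / (2560 * Real.exp 2) * (Real.exp 2 * (1280 * Θ)) := by grw [hdet, hsum]
    _ = Θ / 2 := by field_simp; ring
  linarith
end
end

section
/- Let h ∈ ℝ^N, let H be the circular convolution matrix of h, and relabel the Fourier coefficients so that |ĥ₀| ≥ |ĥ₁| ≥ … ≥ |ĥ_{N−1}|. Then for every K with 1 ≤ K ≤ N there exist an orthogonal projection matrix P of rank K and a K × K submatrix B of PH such that |det(B)|^{1/K} ≥ e^{−1/2} · √K · |ĥ_{K−1}|. -/
open Finset
open scoped ENNReal NNReal

noncomputable section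

/-- The normalized DFT matrix `(F_N)_{m,n} = N^{-1/2} exp(-2π i m n / N)`. -/
def dftMatrix (N : ℕ) : Matrix (Fin N) (Fin N) ℂ :=
  Matrix.of fun m n => ((Real.sqrt N : ℝ) : ℂ)⁻¹ *
    Complex.exp (-(2 * (Real.pi : ℂ) * Complex.I * ((m : ℕ) : ℂ) * ((n : ℕ) : ℂ)) / (N : ℂ))

/-- The normalized DFT (Fourier coefficients) of a real vector: `ĥ = F_N h`. -/
def dftCoeff {N : ℕ} (h : Fin N → ℝ) : Fin N → ℂ :=
  (dftMatrix N).mulVec fun n => ((h n : ℝ) : ℂ)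

/-!
Let `P` consist of the first `K` rows of the unitary DFT matrix `F`. The rows of `F` are left
eigenvectors of the circulant matrix `H`, with eigenvalues `√N ĥ_m`, so every `K × K` column
submatrix of `PH` has determinant `∏_{m < K} √N ĥ_m` times the corresponding minor of `P`.
Since `P` has orthonormal rows, the squared moduli of its minors `det P[:, f]`, summed over all
`N ^ K` maps `f : Fin K → Fin N`, add up to `K!` (a Cauchy–Binet identity), so some minor
satisfies `N ^ K |det P[:, f]|² ≥ K!`. Hence `|det (PH)[:, f]|² ≥ K! |ĥ_{K-1}|^{2K}`, and `K! ≥ (K / e)^K`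
finishes the proof.
-/

open Matrix Complex
open scoped Nat

namespace Matrix

section CommRing

variable {m n R : Type*} [Fintype m] [DecidableEq m] [CommRing R]

theorem injective_of_det_submatrix_ne_zero {A : Matrix m n R} {f : m → n}
    (hf : (A.submatrix id f).det ≠ 0) : Function.Injective f :=
  fun i j hij => by_contra fun hne => hf (det_zero_of_column_eq hne fun k => by simp [hij])

variable [Fintype n]

theorem det_mul_eq_sum_det_submatrix_mul_prod (A : Matrix m n R) (B : Matrix n m R) :
    (A * B).det = ∑ f : m → n, (A.submatrix id f).det * ∏ i, B (f i) i := by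
  simp only [det_apply', mul_apply, Fintype.prod_sum, prod_mul_distrib, mul_sum, sum_mul,
    submatrix_apply, id_eq]
  rw [sum_comm]
  exact sum_congr rfl fun f _ => sum_congr rfl fun σ _ => by ring

theorem sum_det_submatrix_mul_det_submatrix (A : Matrix m n R) (B : Matrix n m R) :
    ∑ f : m → n, (A.submatrix id f).det * (B.submatrix f id).det =
      (Fintype.card m)! * (A * B).det := by
  have hperm (σ : Equiv.Perm m) : ∑ f : m → n, (A.submatrix id f).det * ∏ i, B (f (σ i)) i =
      Equiv.Perm.sign σ * (A * B).det := by
    -- substituting `f ↦ f ∘ σ⁻¹` permutes the columns of `A.submatrix id f`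
    rw [det_mul_eq_sum_det_submatrix_mul_prod, mul_sum,
      ← (Equiv.arrowCongr σ (Equiv.refl n)).sum_comp]
    refine sum_congr rfl fun f _ => ?_
    have : A.submatrix id (σ.arrowCongr (Equiv.refl n) f) =
        (A.submatrix id f).submatrix id σ.symm := rfl
    simp only [Equiv.arrowCongr_apply, Equiv.coe_refl, Function.comp_apply,
      Equiv.symm_apply_apply, this, det_permute', Equiv.Perm.sign_symm, id_eq, mul_assoc]
  simp only [det_apply (B.submatrix _ _), submatrix_apply, id_eq, mul_sum, Units.smul_def,
    zsmul_eq_mul, mul_left_comm _ (Equiv.Perm.sign _ : R)]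
  rw [sum_comm]
  calc _ = ∑ σ : Equiv.Perm m, (Equiv.Perm.sign σ : R) * (Equiv.Perm.sign σ * (A * B).det) :=
        sum_congr rfl fun σ _ => by simp only [← hperm σ, mul_sum]
    _ = (Fintype.card m)! * (A * B).det := by
        simp only [← mul_assoc, ← Int.cast_mul, ← Units.val_mul, Int.units_mul_self, Units.val_one,
          Int.cast_one, one_mul, sum_const, card_univ, Fintype.card_perm, nsmul_eq_mul]

theorem rank_eq_card_of_mul_eq_one {K : Type*} [Field K] {A : Matrix m n K} {B : Matrix n m K}
    (hAB : A * B = 1) : A.rank = Fintype.card m :=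
  le_antisymm A.rank_le_card_height (by simpa [hAB, rank_one] using rank_mul_le_left A B)

end CommRing

section RCLike

variable {m n 𝕜 : Type*} [DecidableEq m] [Fintype n] [RCLike 𝕜]

theorem submatrix_mul_conjTranspose_eq_one {A : Matrix n n 𝕜} [DecidableEq n]
    (hA : A * Aᴴ = 1) {r : m → n} (hr : Function.Injective r) :
    A.submatrix r id * (A.submatrix r id)ᴴ = 1 := by
  rw [conjTranspose_submatrix, ← submatrix_mul _ _ _ _ _ Function.bijective_id, hA,
    submatrix_one _ hr]

variable [Fintype m]

theorem sum_norm_sq_det_submatrix (A : Matrix m n 𝕜) :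
    ((∑ f : m → n, ‖(A.submatrix id f).det‖ ^ 2 : ℝ) : 𝕜) =
      (Fintype.card m)! * (A * Aᴴ).det := by
  rw [← sum_det_submatrix_mul_det_submatrix]
  push_cast
  refine sum_congr rfl fun f _ => ?_
  rw [← conjTranspose_submatrix, det_conjTranspose, RCLike.star_def, RCLike.mul_conj]

theorem exists_factorial_le_mul_norm_sq_det_submatrix [Nonempty n] {A : Matrix m n 𝕜}
    (hA : A * Aᴴ = 1) : ∃ f : m → n,
      ((Fintype.card m)! : ℝ) ≤ Fintype.card n ^ Fintype.card m * ‖(A.submatrix id f).det‖ ^ 2 := by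
  have hsum : ∑ f : m → n, ‖(A.submatrix id f).det‖ ^ 2 = (Fintype.card m)! := by
    have := sum_norm_sq_det_submatrix A
    rw [hA, det_one, mul_one] at this
    exact_mod_cast this
  obtain ⟨f, -, hf⟩ := exists_le_of_sum_le univ_nonempty
    (f := fun _ => ((Fintype.card m)! : ℝ) / Fintype.card n ^ Fintype.card m)
    (g := fun f => ‖(A.submatrix id f).det‖ ^ 2) (by
      rw [hsum, sum_const, card_univ, Fintype.card_fun, nsmul_eq_mul]
      push_cast
      field_simp
      rfl)
  exact ⟨f, by rwa [div_le_iff₀' (by positivity)] at hf⟩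

open scoped Matrix.Norms.L2Operator in
theorem sum_norm_sq_mulVec_le_of_mul_conjTranspose_eq_one {A : Matrix m n 𝕜} (hA : A * Aᴴ = 1)
    (v : n → 𝕜) : ∑ i, ‖(A *ᵥ v) i‖ ^ 2 ≤ ∑ j, ‖v j‖ ^ 2 := by
  classical
  have hA1 : ‖A‖ ≤ 1 := by
    have : ‖A‖ * ‖A‖ ≤ 1 := by
      rw [← l2_opNorm_conjTranspose, ← l2_opNorm_conjTranspose_mul_self,
        conjTranspose_conjTranspose, hA, cstar_norm_def, map_one]
      exact ContinuousLinearMap.norm_id_le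
    nlinarith [norm_nonneg A]
  have hv : ‖WithLp.toLp 2 (A *ᵥ v)‖ ≤ ‖WithLp.toLp 2 v‖ :=
    (A.l2_opNorm_mulVec (WithLp.toLp 2 v)).trans (mul_le_of_le_one_left (norm_nonneg _) hA1)
  simpa only [EuclideanSpace.norm_sq_eq] using pow_le_pow_left₀ (norm_nonneg _) hv 2

end RCLike

end Matrix

section RootOfUnity

variable {R : Type*} [CommRing R] {N : ℕ} {ζ : R}

theorem vandermonde_pow_mul_circulant [NeZero N] (hζ : ζ ^ N = 1) (c : Fin N → R) :
    vandermonde (fun j : Fin N => ζ ^ (j : ℕ)) * circulant c =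
      diagonal (vandermonde (fun j : Fin N => ζ ^ (j : ℕ)) *ᵥ c) *
        vandermonde (fun j : Fin N => ζ ^ (j : ℕ)) := by
  ext j n
  have hshift (i : Fin N) : (ζ ^ (j : ℕ)) ^ ((i + n : Fin N) : ℕ) =
      (ζ ^ (j : ℕ)) ^ (i : ℕ) * (ζ ^ (j : ℕ)) ^ (n : ℕ) := by
    have hζj : (ζ ^ (j : ℕ)) ^ N = 1 := by rw [← pow_mul, mul_comm, pow_mul, hζ, one_pow]
    rw [Fin.val_add, ← pow_eq_pow_mod _ hζj, pow_add]
  rw [diagonal_mul, mul_apply]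
  simp only [mulVec, dotProduct, circulant_apply, vandermonde_apply, sum_mul]
  rw [← Equiv.sum_comp (Equiv.addRight n)]
  simp only [Equiv.coe_addRight, add_sub_cancel_right, hshift]
  exact sum_congr rfl fun i _ => by ring

theorem sum_fin_pow_eq_zero [IsDomain R] {x : R} (hxN : x ^ N = 1) (hx1 : x ≠ 1) :
    ∑ i : Fin N, x ^ (i : ℕ) = 0 := by
  rw [Fin.sum_univ_eq_sum_range (x ^ ·)]
  refine (mul_eq_zero.mp ?_).resolve_right (sub_ne_zero.mpr hx1)
  rw [geom_sum_mul, hxN, sub_self]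

end RootOfUnity

theorem IsPrimitiveRoot.vandermonde_mul_conjTranspose {N : ℕ} {ζ : ℂ} (hζ : IsPrimitiveRoot ζ N) :
    vandermonde (fun j : Fin N => ζ ^ (j : ℕ)) * (vandermonde (fun j : Fin N => ζ ^ (j : ℕ)))ᴴ =
      (N : ℂ) • 1 := by
  ext j k
  have hN : N ≠ 0 := j.pos.ne'
  set x := ζ ^ (j : ℕ) * (ζ ^ (k : ℕ))⁻¹ with hx
  have hterm (n : Fin N) : (ζ ^ (j : ℕ)) ^ (n : ℕ) * star ((ζ ^ (k : ℕ)) ^ (n : ℕ)) =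
      x ^ (n : ℕ) := by
    rw [hx, mul_pow, inv_pow, Complex.star_def, ← Complex.inv_eq_conj]
    rw [norm_pow, norm_pow, hζ.norm'_eq_one hN, one_pow, one_pow]
  have hxN : x ^ N = 1 := by
    rw [hx, mul_pow, inv_pow, ← pow_mul, ← pow_mul, mul_comm _ N, mul_comm _ N, pow_mul, pow_mul,
      hζ.pow_eq_one, one_pow, one_pow, inv_one, mul_one]
  simp only [mul_apply, conjTranspose_apply, vandermonde_apply, hterm, Matrix.smul_apply,
    one_apply, smul_eq_mul, mul_ite, mul_one, mul_zero]
  split_ifs with hjk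
  · simp [hx, hjk, mul_inv_cancel₀ (pow_ne_zero _ (hζ.ne_zero hN))]
  · refine sum_fin_pow_eq_zero hxN fun hx1 => hjk (Fin.ext (hζ.pow_inj j.isLt k.isLt ?_))
    rwa [hx, mul_inv_eq_one₀ (pow_ne_zero _ (hζ.ne_zero hN))] at hx1

theorem isPrimitiveRoot_exp_neg (N : ℕ) (hN : N ≠ 0) :
    IsPrimitiveRoot (cexp (-(2 * Real.pi * I / N))) N := by
  rw [exp_neg]
  exact (isPrimitiveRoot_exp N hN).inv

theorem dftMatrix_eq_smul_vandermonde (N : ℕ) :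
    dftMatrix N = ((√N : ℝ) : ℂ)⁻¹ •
      vandermonde (fun j : Fin N => cexp (-(2 * Real.pi * I / N)) ^ (j : ℕ)) := by
  ext m n
  rw [dftMatrix, of_apply, Matrix.smul_apply, vandermonde_apply, ← pow_mul, ← exp_nat_mul,
    smul_eq_mul]
  push_cast
  ring_nf

theorem dftMatrix_mul_conjTranspose {N : ℕ} (hN : N ≠ 0) : dftMatrix N * (dftMatrix N)ᴴ = 1 := by
  rw [dftMatrix_eq_smul_vandermonde, conjTranspose_smul, smul_mul_smul_comm,
    (isPrimitiveRoot_exp_neg N hN).vandermonde_mul_conjTranspose, smul_smul, star_inv₀,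
    Complex.star_def, conj_ofReal, ← mul_inv, ← ofReal_mul, Real.mul_self_sqrt (Nat.cast_nonneg N),
    ofReal_natCast, inv_mul_cancel₀ (Nat.cast_ne_zero.mpr hN), one_smul]

theorem dftMatrix_mul_circulant {N : ℕ} [NeZero N] (h : Fin N → ℝ) :
    dftMatrix N * (circulant h).map (fun a : ℝ => (a : ℂ)) =
      diagonal (fun m => ((√N : ℝ) : ℂ) * dftCoeff h m) * dftMatrix N := by
  have hs : ((√N : ℝ) : ℂ) ≠ 0 := by
    exact_mod_cast (Real.sqrt_pos.mpr (Nat.cast_pos.mpr (NeZero.pos N))).ne'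
  rw [map_circulant, dftCoeff, dftMatrix_eq_smul_vandermonde, smul_mul,
    vandermonde_pow_mul_circulant (isPrimitiveRoot_exp_neg N (NeZero.ne N)).pow_eq_one,
    mul_smul_comm, smul_mulVec]
  congr 3
  ext m
  rw [Pi.smul_apply, smul_eq_mul, ← mul_assoc, mul_inv_cancel₀ hs, one_mul]

theorem submatrix_dftMatrix_mul_circulant {N : ℕ} [NeZero N] {ι : Type*} [Fintype ι]
    [DecidableEq ι] (r : ι → Fin N) (h : Fin N → ℝ) :
    (dftMatrix N).submatrix r id * (circulant h).map (fun a : ℝ => (a : ℂ)) =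
      diagonal (fun i => ((√N : ℝ) : ℂ) * dftCoeff h (r i)) * (dftMatrix N).submatrix r id := by
  ext i j
  have := congrFun₂ (dftMatrix_mul_circulant h) (r i) j
  rw [diagonal_mul] at this ⊢
  exact this

theorem norm_det_submatrix_dftMatrix_mul_circulant {N K : ℕ} [NeZero N] (r f : Fin K → Fin N)
    (h : Fin N → ℝ) :
    ‖(((dftMatrix N).submatrix r id * (circulant h).map (fun a : ℝ => (a : ℂ))).submatrix
        id f).det‖ =
      √N ^ K * (∏ i, ‖dftCoeff h (r i)‖) *
        ‖(((dftMatrix N).submatrix r id).submatrix id f).det‖ := by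
  rw [submatrix_dftMatrix_mul_circulant, submatrix_mul _ _ _ id _ Function.bijective_id,
    submatrix_id_id, det_mul, det_diagonal, norm_mul, norm_prod]
  simp only [norm_mul, norm_real, Real.norm_of_nonneg (Real.sqrt_nonneg _), prod_mul_distrib,
    prod_const, card_univ, Fintype.card_fin]

theorem exp_neg_one_mul_pow_le_factorial (n : ℕ) : (Real.exp (-1) * n) ^ n ≤ n ! := by
  have := Real.pow_div_factorial_le_exp (n : ℝ) (Nat.cast_nonneg n) n
  rw [div_le_iff₀ (by positivity)] at this
  rw [mul_pow, ← Real.exp_nat_mul, mul_neg_one, Real.exp_neg, inv_mul_le_iff₀ (Real.exp_pos _)]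
  linarith

theorem exp_neg_half_mul_sqrt_mul_le_rpow {K : ℕ} (hK : K ≠ 0) {a x : ℝ} (ha : 0 ≤ a)
    (hx : 0 ≤ x) (h : K ! * (a ^ 2) ^ K ≤ x ^ 2) :
    Real.exp (-(1 / 2)) * √K * a ≤ x ^ ((1 : ℝ) / K) := by
  have hsq : (Real.exp (-(1 / 2)) * √K * a) ^ 2 = Real.exp (-1) * K * a ^ 2 := by
    rw [mul_pow, mul_pow, Real.sq_sqrt (Nat.cast_nonneg K), ← Real.exp_nat_mul]
    norm_num
  rw [one_div (K : ℝ), Real.le_rpow_inv_iff_of_pos (by positivity) hx (by positivity),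
    Real.rpow_natCast]
  refine (pow_le_pow_iff_left₀ (by positivity) hx two_ne_zero).mp ?_
  calc ((Real.exp (-(1 / 2)) * √K * a) ^ K) ^ 2 = (Real.exp (-1) * K) ^ K * (a ^ 2) ^ K := by
        rw [← pow_mul, mul_comm K 2, pow_mul, hsq, mul_pow]
    _ ≤ K ! * (a ^ 2) ^ K :=
        mul_le_mul_of_nonneg_right (exp_neg_one_mul_pow_le_factorial K) (by positivity)
    _ ≤ x ^ 2 := h

/-- for `h ∈ ℝ^N` with Fourier coefficients sorted so that
`|ĥ₀| ≥ … ≥ |ĥ_{N-1}|`, for every `1 ≤ K ≤ N` there are an orthogonal projection matrix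
`P` of rank `K` (an ℓ₂-contraction) and a `K × K` submatrix `B` of `PH` with
`|det B|^{1/K} ≥ e^{-1/2} √K |ĥ_{K-1}|`, where `H` is the circular convolution matrix
of `h`. -/
theorem projection_submatrix_det (N : ℕ) (h : Fin N → ℝ)
    (hmono : ∀ i j : Fin N, i ≤ j → ‖dftCoeff h j‖ ≤ ‖dftCoeff h i‖)
    (K : ℕ) (hK1 : 1 ≤ K) (hK2 : K ≤ N) :
    ∃ (L : ℕ) (P : Matrix (Fin L) (Fin N) ℂ),
      (∀ v : Fin N → ℂ, ∑ i, ‖P.mulVec v i‖ ^ 2 ≤ ∑ i, ‖v i‖ ^ 2) ∧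
      P.rank = K ∧
      ∃ (r : Fin K → Fin L) (c : Fin K → Fin N),
        Function.Injective r ∧ Function.Injective c ∧
        Real.exp (-(1 / 2)) * Real.sqrt K * ‖dftCoeff h ⟨K - 1, by omega⟩‖ ≤
          ‖((P * (Matrix.circulant h).map (fun a : ℝ => (a : ℂ))).submatrix r c).det‖ ^
            ((1 : ℝ) / K) := by
  have : NeZero N := ⟨by omega⟩
  set P := (dftMatrix N).submatrix (Fin.castLE hK2) id
  have hPP : P * Pᴴ = 1 := submatrix_mul_conjTranspose_eq_one
    (dftMatrix_mul_conjTranspose (NeZero.ne N)) (Fin.castLE_injective hK2)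
  obtain ⟨f, hf⟩ := exists_factorial_le_mul_norm_sq_det_submatrix hPP
  simp only [Fintype.card_fin] at hf
  have hf0 : (P.submatrix id f).det ≠ 0 := fun h0 => by
    simp [h0, K.factorial_ne_zero] at hf
  refine ⟨K, P, sum_norm_sq_mulVec_le_of_mul_conjTranspose_eq_one hPP,
    by simpa using rank_eq_card_of_mul_eq_one hPP, id, f, Function.injective_id,
    injective_of_det_submatrix_ne_zero hf0, ?_⟩
  rw [norm_det_submatrix_dftMatrix_mul_circulant]
  refine exp_neg_half_mul_sqrt_mul_le_rpow (by omega) (norm_nonneg _) (by positivity) ?_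
  have ha (i : Fin K) : ‖dftCoeff h ⟨K - 1, by omega⟩‖ ≤ ‖dftCoeff h (Fin.castLE hK2 i)‖ :=
    hmono _ _ (by rw [Fin.le_def, Fin.val_castLE]; exact Nat.le_sub_one_of_lt i.isLt)
  calc _ = (‖dftCoeff h ⟨K - 1, by omega⟩‖ ^ K) ^ 2 * K ! := by ring
    _ ≤ (∏ i, ‖dftCoeff h (Fin.castLE hK2 i)‖) ^ 2 * (N ^ K * ‖(P.submatrix id f).det‖ ^ 2) := by
        gcongr
        have := prod_le_prod (s := univ) (fun i _ => norm_nonneg _) fun i _ => ha i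
        simpa using this
    _ = _ := by
        rw [show (N : ℝ) ^ K = (√N ^ K) ^ 2 by
          rw [← pow_mul, mul_comm, pow_mul, Real.sq_sqrt (Nat.cast_nonneg _)]]
        ring

end
end
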